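/- arXiv:1902.10188 — 4 statements merged into one kernel-verified Lean document; each statement's English description precedes it below -/
import Mathlib

section
/- The set {(n, m) ∈ ℕ² : n = 2^m} is not a semilinear subset of ℕ²; in particular, the zero set of the 2-dimensional linear recurrence sequence s_{n,m} = uᵀ A^n B^m v with u = (0,1)ᵀ, v = (1,−1)ᵀ, A = [[1,0],[1,1]], B = [[1,0],[0,2]] is not a finite union of sets of the form {p + k₁q₁ + ⋯ + k_r q_r : k_i ∈ ℕ} with p, q_i ∈ ℕ². -/
/-!
An infinite semilinear set contains an infinite arithmetic progression `x + k • v` with `v ≠ 0`: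
one of its finitely many linear pieces is infinite, hence has a nonzero period. But the graph of
`m ↦ 2 ^ m` contains no nontrivial three-term progression: if `(2 ^ a, a)`, `(2 ^ a + u, a + w)`
and `(2 ^ a + 2 * u, a + 2 * w)` all lie on it, then `s = 2 ^ a` and `t = 2 ^ w` satisfy
`s * t ^ 2 + s = 2 * s * t`, i.e. `s * (t - 1) ^ 2 = 0`, so `w = 0` and then `u = 0`.
-/

/-- A linear subset of ℕ²: all points p + k₁q₁ + ⋯ + k_r q_r. -/
def IsLinearSetNat2 (S : Set (ℕ × ℕ)) : Prop :=
  ∃ (p : ℕ × ℕ) (r : ℕ) (q : Fin r → ℕ × ℕ),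
    S = {x | ∃ c : Fin r → ℕ, x = p + ∑ i, c i • q i}

/-- A semilinear subset of ℕ²: a finite union of linear sets. -/
def IsSemilinearSetNat2 (S : Set (ℕ × ℕ)) : Prop :=
  ∃ (N : ℕ) (L : Fin N → Set (ℕ × ℕ)),
    (∀ i, IsLinearSetNat2 (L i)) ∧ S = ⋃ i, L i

theorem IsLinearSetNat2.exists_ne_zero_add_nsmul_mem {L : Set (ℕ × ℕ)} (hL : IsLinearSetNat2 L)
    (hnt : L.Nontrivial) : ∃ v ≠ 0, ∀ z ∈ L, ∀ k : ℕ, z + k • v ∈ L := by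
  obtain ⟨p, r, q, rfl⟩ := hL
  obtain ⟨j, hj⟩ : ∃ j, q j ≠ 0 := by
    by_contra! hq
    obtain ⟨_, ⟨c, rfl⟩, _, ⟨d, rfl⟩, hcd⟩ := hnt
    simp [hq] at hcd
  refine ⟨q j, hj, ?_⟩
  rintro _ ⟨c, rfl⟩ k
  refine ⟨c + Pi.single j k, ?_⟩
  simp only [Pi.add_apply, add_smul, Finset.sum_add_distrib, add_assoc]
  congr 2
  rw [Finset.sum_eq_single j (fun i _ hi => by simp [hi]) (by simp)]
  simp

theorem IsSemilinearSetNat2.exists_add_nsmul_mem {S : Set (ℕ × ℕ)} (hS : IsSemilinearSetNat2 S)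
    (hinf : S.Infinite) : ∃ x ∈ S, ∃ v ≠ 0, ∀ k : ℕ, x + k • v ∈ S := by
  obtain ⟨N, L, hL, rfl⟩ := hS
  obtain ⟨i, hi⟩ : ∃ i, (L i).Infinite := by
    by_contra! h
    exact hinf (Set.finite_iUnion h)
  obtain ⟨x, hx⟩ := hi.nonempty
  obtain ⟨v, hv, hadd⟩ := (hL i).exists_ne_zero_add_nsmul_mem hi.nontrivial
  exact ⟨x, Set.mem_iUnion_of_mem i hx, v, hv, fun k => Set.mem_iUnion_of_mem i (hadd x hx k)⟩

theorem eq_zero_of_pow_add_eq_pow_add {b a u w : ℕ} (hb : 2 ≤ b)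
    (h₁ : b ^ a + u = b ^ (a + w)) (h₂ : b ^ a + 2 * u = b ^ (a + 2 * w)) : u = 0 ∧ w = 0 := by
  rw [pow_add] at h₁
  rw [pow_add, pow_mul'] at h₂
  have hs : b ^ a ≠ 0 := by positivity
  zify at h₁ h₂
  have hsq : (b ^ a : ℤ) * (b ^ w - 1) ^ 2 = 0 := by linear_combination 2 * h₁ - h₂
  have hw : b ^ w = b ^ 0 := by
    have ht := (mul_eq_zero.mp hsq).resolve_left (by exact_mod_cast hs)
    exact_mod_cast sub_eq_zero.mp (pow_eq_zero_iff two_ne_zero |>.mp ht)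
  obtain rfl : w = 0 := Nat.pow_right_injective hb hw
  exact ⟨by simpa using h₁, rfl⟩

theorem setOf_fst_eq_two_pow_snd_infinite : {x : ℕ × ℕ | x.1 = 2 ^ x.2}.Infinite :=
  Set.infinite_of_injective_forall_mem (f := fun m => (2 ^ m, m))
    (fun _ _ h => congrArg Prod.snd h) fun _ => rfl

theorem zero_set_of_two_lrs_not_semilinear :
    ¬ IsSemilinearSetNat2 {x : ℕ × ℕ | x.1 = 2 ^ x.2} := by
  intro hS
  obtain ⟨x, hx : x.1 = 2 ^ x.2, v, hv, hprog⟩ :=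
    hS.exists_add_nsmul_mem setOf_fst_eq_two_pow_snd_infinite
  have h₁ : 2 ^ x.2 + v.1 = 2 ^ (x.2 + v.2) := by simpa [hx] using hprog 1
  have h₂ : 2 ^ x.2 + 2 * v.1 = 2 ^ (x.2 + 2 * v.2) := by simpa [hx] using hprog 2
  obtain ⟨hv₁, hv₂⟩ := eq_zero_of_pow_add_eq_pow_add le_rfl h₁ h₂
  exact hv (Prod.ext hv₁ hv₂)
end

section
/- Let F be a field, k ≥ 1, and let (u_n) be a sequence in F satisfying the linear recurrence u_n = a_{k−1}u_{n−1} + ⋯ + a₀u_{n−k} for n ≥ k. Define the k×k matrices A (first row equal to (u_{k−1}, …, u₁, u₀) and all other rows zero), B (the companion-type matrix with first column (a_{k−1}, …, a₁, a₀)ᵀ, the (i, i+1) entries equal to 1 for i = 1,…,k−1, and all other entries zero), and C (with (k,k)-entry 1 and all other entries zero). Then for all m, ℓ ≥ 1 and n ≥ 0, the product A^m B^n C^ℓ has every entry zero except the (1,k)-entry, which equals u_{k−1}^{m−1} · u_n. -/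
/-!
A is the rank-one matrix e₀ wᵀ with w = (u_{k-1}, …, u_0), so A^m = u_{k-1}^{m-1} A, and
C = e_{k-1} e_{k-1}ᵀ is idempotent. Right multiplication by B advances the window
(u_{n+k-1}, …, u_n) of the recurrence by one step, so wᵀ Bⁿ = (u_{n+k-1}, …, u_n) and
A^m Bⁿ C^ℓ = u_{k-1}^{m-1} (wᵀ Bⁿ e_{k-1}) e₀ e_{k-1}ᵀ = u_{k-1}^{m-1} u_n e₀ e_{k-1}ᵀ.
-/

open Matrix Finset

section RankOne

variable {n R : Type*} [Fintype n] [DecidableEq n] [CommSemiring R]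

omit [DecidableEq n] in
theorem vecMulVec_mul_self (x w : n → R) :
    vecMulVec x w * vecMulVec x w = (w ⬝ᵥ x) • vecMulVec x w := by
  rw [vecMulVec_mul_vecMulVec, vecMulVec_smul]

theorem vecMulVec_pow_succ (x w : n → R) (m : ℕ) :
    vecMulVec x w ^ (m + 1) = (w ⬝ᵥ x) ^ m • vecMulVec x w := by
  induction m with
  | zero => simp
  | succ m ih => rw [pow_succ, ih, smul_mul, vecMulVec_mul_self, smul_smul, ← pow_succ]

end RankOne

section Recurrence

variable {R : Type*} [CommSemiring R]

def recurrenceMatrix (a : ℕ → R) (k : ℕ) : Matrix (Fin k) (Fin k) R :=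
  of fun i j => if (j : ℕ) = 0 then a (k - 1 - i) else if (j : ℕ) = i + 1 then 1 else 0

def recurrenceState (u : ℕ → R) (k n : ℕ) : Fin k → R :=
  fun j => u (n + (k - 1 - j))

theorem vecMul_recurrenceMatrix_apply_of_val_eq_zero (a : ℕ → R) {k : ℕ} (v : Fin k → R)
    {j : Fin k} (hj : (j : ℕ) = 0) :
    (v ᵥ* recurrenceMatrix a k) j = ∑ t, v t * a (k - 1 - t) := by
  simp [vecMul, dotProduct, recurrenceMatrix, hj]

theorem vecMul_recurrenceMatrix_apply_of_val_ne_zero (a : ℕ → R) {k : ℕ} (v : Fin k → R)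
    {j : Fin k} (hj : (j : ℕ) ≠ 0) :
    (v ᵥ* recurrenceMatrix a k) j = v ⟨j - 1, by omega⟩ := by
  rw [vecMul, dotProduct, Finset.sum_eq_single ⟨j - 1, by omega⟩]
  · simp [recurrenceMatrix, hj, Nat.sub_add_cancel (Nat.pos_of_ne_zero hj)]
  · intro t _ ht
    have : (j : ℕ) ≠ t + 1 := fun h => ht (Fin.ext (by simp; omega))
    simp [recurrenceMatrix, hj, this]
  · simp

variable {u a : ℕ → R} {k : ℕ}

theorem recurrenceState_vecMul_recurrenceMatrix
    (hrec : ∀ n, k ≤ n → u n = ∑ i ∈ range k, a i * u (n - k + i)) (n : ℕ) :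
    recurrenceState u k n ᵥ* recurrenceMatrix a k = recurrenceState u k (n + 1) := by
  ext j
  by_cases hj : (j : ℕ) = 0
  · rw [vecMul_recurrenceMatrix_apply_of_val_eq_zero a _ hj]
    have hnk : n + 1 + (k - 1 - j) = n + k := by omega
    simp only [recurrenceState, hnk, hrec (n + k) (by omega), Nat.add_sub_cancel]
    rw [Fin.sum_univ_eq_sum_range (fun t => u (n + (k - 1 - t)) * a (k - 1 - t))]
    exact (sum_range_reflect (fun t => u (n + t) * a t) k).trans
      (sum_congr rfl fun t _ => mul_comm _ _)
  · rw [vecMul_recurrenceMatrix_apply_of_val_ne_zero a _ hj]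
    simp only [recurrenceState]
    congr 1
    omega

theorem recurrenceState_zero_vecMul_recurrenceMatrix_pow
    (hrec : ∀ n, k ≤ n → u n = ∑ i ∈ range k, a i * u (n - k + i)) (n : ℕ) :
    recurrenceState u k 0 ᵥ* recurrenceMatrix a k ^ n = recurrenceState u k n := by
  induction n with
  | zero => simp
  | succ n ih => rw [pow_succ, ← vecMul_vecMul, ih, recurrenceState_vecMul_recurrenceMatrix hrec]

end Recurrence

theorem abc_product_entries_general
    {F : Type*} [Field F] {k : ℕ} (u : ℕ → F) (a : ℕ → F)
    (hrec : ∀ n, k ≤ n → u n = ∑ i ∈ Finset.range k, a i * u (n - k + i))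
    (A B C : Matrix (Fin k) (Fin k) F)
    (hA : ∀ i j : Fin k, A i j = if (i : ℕ) = 0 then u (k - 1 - (j : ℕ)) else 0)
    (hB : ∀ i j : Fin k, B i j =
      if (j : ℕ) = 0 then a (k - 1 - (i : ℕ))
      else if (j : ℕ) = (i : ℕ) + 1 then 1 else 0)
    (hC : ∀ i j : Fin k, C i j =
      if (i : ℕ) = k - 1 ∧ (j : ℕ) = k - 1 then 1 else 0) :
    ∀ m n ℓ : ℕ, 1 ≤ m → 1 ≤ ℓ → ∀ i j : Fin k,
      (A ^ m * B ^ n * C ^ ℓ) i j =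
        if (i : ℕ) = 0 ∧ (j : ℕ) = k - 1 then u (k - 1) ^ (m - 1) * u n else 0 := by
  intro m n ℓ hm hℓ i j
  obtain ⟨m, rfl⟩ := Nat.exists_eq_add_of_le' hm
  obtain ⟨ℓ, rfl⟩ := Nat.exists_eq_add_of_le' hℓ
  have hk : 0 < k := i.pos
  have : NeZero k := ⟨hk.ne'⟩
  let e : Fin k := ⟨k - 1, by omega⟩
  have hA' : A = vecMulVec (Pi.single 0 1) (recurrenceState u k 0) := by
    ext i j
    simp only [hA, vecMulVec_apply, recurrenceState, Pi.single_apply, Fin.ext_iff, Fin.val_zero]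
    split_ifs <;> simp
  have hB' : B = recurrenceMatrix a k := by
    ext i j
    exact hB i j
  have hC' : C = single e e 1 := by
    ext i j
    simp only [hC, single_apply, Fin.ext_iff, e, eq_comm]
  rw [hA', hB', hC', single_eq_single_vecMulVec_single, vecMulVec_pow_succ, vecMulVec_pow_succ]
  simp only [smul_mul, vecMulVec_mul, vecMul_vecMulVec,
    recurrenceState_zero_vecMul_recurrenceMatrix_pow hrec, dotProduct_single_one,
    Pi.single_eq_same, one_pow, one_smul, Matrix.smul_apply, vecMulVec_apply, Pi.smul_apply,
    recurrenceState, Pi.single_apply, Fin.ext_iff, Fin.val_zero, smul_eq_mul]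
  have he : (e : ℕ) = k - 1 := rfl
  simp only [he, Nat.sub_self, Nat.sub_zero, add_zero, zero_add, Nat.add_sub_cancel]
  split_ifs <;> simp_all

theorem abc_product_entries
    {F : Type*} [Field F] {k : ℕ} (hk : 0 < k) (u : ℕ → F) (a : ℕ → F)
    (hrec : ∀ n, k ≤ n → u n = ∑ i ∈ Finset.range k, a i * u (n - k + i))
    (A B C : Matrix (Fin k) (Fin k) F)
    (hA : ∀ i j : Fin k, A i j = if (i : ℕ) = 0 then u (k - 1 - (j : ℕ)) else 0)
    (hB : ∀ i j : Fin k, B i j =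
      if (j : ℕ) = 0 then a (k - 1 - (i : ℕ))
      else if (j : ℕ) = (i : ℕ) + 1 then 1 else 0)
    (hC : ∀ i j : Fin k, C i j =
      if (i : ℕ) = k - 1 ∧ (j : ℕ) = k - 1 then 1 else 0) :
    ∀ m n ℓ : ℕ, 1 ≤ m → 1 ≤ ℓ → ∀ i j : Fin k,
      (A ^ m * B ^ n * C ^ ℓ) i j =
        if (i : ℕ) = 0 ∧ (j : ℕ) = k - 1 then u (k - 1) ^ (m - 1) * u n else 0 :=
  abc_product_entries_general u a hrec A B C hA hB hC
end

section
/- Let F be a field and let (u_n) satisfy the linear recurrence of depth k with companion matrix setup as follows: B is the k×k matrix with first column (a_{k−1},…,a₀)ᵀ and superdiagonal-style 1's as in the companion form, and A has first row (u_{k−1},…,u₀) with all other rows zero. If u_{k−1} ≠ 0, then: there exist m, n, ℓ ∈ ℕ with m, ℓ ≥ 1 and A^m B^n C^ℓ = 0 if and only if there exists n ∈ ℕ with u_n = 0 (where C has a single 1 in position (k,k)). -/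
theorem abc_mortality_iff_skolem
    {F : Type*} [Field F] {k : ℕ} (hk : 0 < k) (u : ℕ → F) (a : ℕ → F)
    (hrec : ∀ n, k ≤ n → u n = ∑ i ∈ Finset.range k, a i * u (n - k + i))
    (A B C : Matrix (Fin k) (Fin k) F)
    (hA : ∀ i j : Fin k, A i j = if (i : ℕ) = 0 then u (k - 1 - (j : ℕ)) else 0)
    (hB : ∀ i j : Fin k, B i j =
      if (j : ℕ) = 0 then a (k - 1 - (i : ℕ))
      else if (j : ℕ) = (i : ℕ) + 1 then 1 else 0)
    (hC : ∀ i j : Fin k, C i j =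
      if (i : ℕ) = k - 1 ∧ (j : ℕ) = k - 1 then 1 else 0)
    (hu : u (k - 1) ≠ 0) :
    (∃ m n ℓ : ℕ, 1 ≤ m ∧ 1 ≤ ℓ ∧ A ^ m * B ^ n * C ^ ℓ = 0) ↔ ∃ n, u n = 0 := by
  have hk1 : k - 1 < k := by omega
  set z : Fin k := ⟨0, hk⟩ with hz
  set e : Fin k := ⟨k - 1, hk1⟩ with he
  -- rows other than 0 of A * M are zero
  have hrow0 : ∀ (M : Matrix (Fin k) (Fin k) F) (i j : Fin k), (i : ℕ) ≠ 0 →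
      (A * M) i j = 0 := by
    intro M i j hi
    rw [Matrix.mul_apply]
    apply Finset.sum_eq_zero
    intro t _
    rw [hA, if_neg hi, zero_mul]
  -- first row of A * B ^ n
  have hrow : ∀ n (j : Fin k), (A * B ^ n) z j = u (k - 1 + n - (j : ℕ)) := by
    intro n
    induction n with
    | zero =>
      intro j
      simp only [pow_zero, mul_one, hA, hz]
      have : k - 1 + 0 - (j : ℕ) = k - 1 - (j : ℕ) := by omega
      rw [this]
      simp
    | succ n ih =>
      intro j
      have hstep : A * B ^ (n + 1) = (A * B ^ n) * B := by rw [pow_succ, mul_assoc]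
      rw [hstep, Matrix.mul_apply]
      by_cases hj : (j : ℕ) = 0
      · -- sum over t of u(k-1+n-t) * a(k-1-t) = u(n+k)
        have h1 : ∀ t : Fin k, (A * B ^ n) z t * B t j
            = u (k - 1 + n - (t : ℕ)) * a (k - 1 - (t : ℕ)) := by
          intro t
          rw [ih, hB, if_pos hj]
        rw [Finset.sum_congr rfl (fun t _ => h1 t)]
        have h2 : u (k - 1 + (n + 1) - (j : ℕ)) = u (n + k) := by
          congr 1; omega
        rw [h2, hrec (n + k) (by omega)]
        rw [Fin.sum_univ_eq_sum_range (fun t => u (k - 1 + n - t) * a (k - 1 - t)) k]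
        rw [← Finset.sum_range_reflect (fun i => a i * u (n + k - k + i)) k]
        apply Finset.sum_congr rfl
        intro i hi
        rw [Finset.mem_range] at hi
        rw [mul_comm]
        congr 1
        congr 1
        omega
      · -- only t with t+1 = j contributes
        have hjpos : 0 < (j : ℕ) := Nat.pos_of_ne_zero hj
        rw [Finset.sum_eq_single (⟨(j : ℕ) - 1, by omega⟩ : Fin k)]
        · rw [ih, hB]
          simp only [if_neg hj]
          rw [if_pos (show (j:ℕ) = ((⟨(j : ℕ) - 1, by omega⟩ : Fin k) : ℕ) + 1 from by show (j:ℕ) = (j:ℕ) - 1 + 1; omega), mul_one]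
          congr 1
          omega
        · intro t _ ht
          rw [hB, if_neg hj, if_neg, mul_zero]
          intro hcon
          apply ht
          apply Fin.ext
          simp
          omega
        · intro h; exact absurd (Finset.mem_univ _) h
  -- A * A = u (k-1) • A
  have hAA : A * A = u (k - 1) • A := by
    ext i j
    rw [Matrix.mul_apply, Matrix.smul_apply, smul_eq_mul]
    rw [Finset.sum_eq_single z]
    · rw [hA z j, hA i z, hA i j]
      by_cases hi : (i : ℕ) = 0
      · simp [hi, hz]
      · simp [hi]
    · intro t _ ht
      rw [hA t j, if_neg, mul_zero]
      intro hcon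
      exact ht (Fin.ext hcon)
    · intro h; exact absurd (Finset.mem_univ _) h
  have hApow : ∀ m, 1 ≤ m → A ^ m = u (k - 1) ^ (m - 1) • A := by
    intro m hm
    induction m with
    | zero => omega
    | succ m ih =>
      by_cases hm1 : 1 ≤ m
      · rw [pow_succ, ih hm1, Matrix.smul_mul, hAA, smul_smul, ← pow_succ]
        congr 2
        omega
      · have : m = 0 := by omega
        subst this
        simp
  -- C * C = C
  have hCC : C * C = C := by
    ext i j
    rw [Matrix.mul_apply]
    rw [Finset.sum_eq_single e]
    · rw [hC i e, hC e j, hC i j]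
      by_cases hi : (i : ℕ) = k - 1 <;> by_cases hj : (j : ℕ) = k - 1 <;>
        simp [hi, hj, he]
    · intro t _ ht
      rw [hC i t, if_neg, zero_mul]
      rintro ⟨-, h2⟩
      exact ht (Fin.ext h2)
    · intro h; exact absurd (Finset.mem_univ _) h
  have hCpow : ∀ ℓ, 1 ≤ ℓ → C ^ ℓ = C := by
    intro ℓ hℓ
    induction ℓ with
    | zero => omega
    | succ ℓ ih =>
      by_cases hℓ1 : 1 ≤ ℓ
      · rw [pow_succ, ih hℓ1, hCC]
      · have : ℓ = 0 := by omega
        subst this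
        simp
  -- entries of A * B ^ n * C
  have hABC : ∀ n (i j : Fin k), (A * B ^ n * C) i j
      = if (i : ℕ) = 0 ∧ (j : ℕ) = k - 1 then u n else 0 := by
    intro n i j
    rw [Matrix.mul_apply]
    rw [Finset.sum_eq_single e]
    · rw [hC e j]
      by_cases hi : (i : ℕ) = 0
      · have : i = z := Fin.ext hi
        subst this
        rw [hrow n e]
        have : k - 1 + n - ((e : Fin k) : ℕ) = n := by
          have h : ((e : Fin k) : ℕ) = k - 1 := rfl
          omega
        rw [this]
        by_cases hj : (j : ℕ) = k - 1 <;> simp [hj, he, hi]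
      · rw [hrow0 (B ^ n) i e hi, zero_mul, if_neg]
        intro hcon
        exact hi hcon.1
    · intro t _ ht
      rw [hC t j, if_neg, mul_zero]
      rintro ⟨h1, -⟩
      exact ht (Fin.ext h1)
    · intro h; exact absurd (Finset.mem_univ _) h
  constructor
  · rintro ⟨m, n, ℓ, hm, hℓ, h0⟩
    refine ⟨n, ?_⟩
    have := congrFun (congrFun h0 z) e
    rw [hApow m hm, hCpow ℓ hℓ, Matrix.smul_mul, Matrix.smul_mul,
      Matrix.smul_apply, smul_eq_mul, hABC n z e,
      if_pos (show ((z : Fin k) : ℕ) = 0 ∧ ((e : Fin k) : ℕ) = k - 1 from ⟨rfl, rfl⟩)] at this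
    rw [Matrix.zero_apply] at this
    rcases mul_eq_zero.mp this with h | h
    · exact absurd h (pow_ne_zero _ hu)
    · exact h
  · rintro ⟨n, hn⟩
    refine ⟨1, n, 1, le_refl 1, le_refl 1, ?_⟩
    rw [pow_one, pow_one]
    ext i j
    rw [hABC n i j, Matrix.zero_apply]
    split
    · exact hn
    · rfl
end

section
/- Let A, B, C, D be 2×2 matrices over a field, with A and D singular (rank ≤ 1). Suppose k, m, n, ℓ ∈ ℕ with k, ℓ ≥ 1 is a solution of A^k B^m C^n D^ℓ = 0 minimizing k + m + n + ℓ among all solutions with k, ℓ ≥ 1, and suppose that A^{k}B^{m}C^{n}D^{ℓ−1} ≠ 0 and A^{k−1}B^{m}C^{n}D^{ℓ} ≠ 0. Then k = ℓ = 1. -/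
open Matrix

private lemma mulVec_all_zero {F : Type*} [Field F] {M : Matrix (Fin 2) (Fin 2) F}
    (h : ∀ v, M *ᵥ v = 0) : M = 0 := by
  ext i j
  have := congr_fun (h (Pi.single j 1)) i
  simpa [Matrix.mulVec_single] using this

private lemma rank_one_middle {F : Type*} [Field F] (A Y D : Matrix (Fin 2) (Fin 2) F)
    (hY : Y.rank ≤ 1) (h0 : A * Y * D = 0) (hYD : Y * D ≠ 0) : A * Y = 0 := by
  -- range of (Y*D).mulVecLin equals range of Y.mulVecLin
  have hle : LinearMap.range (Y * D).mulVecLin ≤ LinearMap.range Y.mulVecLin := by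
    rw [Matrix.mulVecLin_mul]
    exact LinearMap.range_comp_le_range _ _
  have hpos : 1 ≤ (Y * D).rank := by
    by_contra hc
    push_neg at hc
    have h0' : (Y * D).rank = 0 := Nat.lt_one_iff.mp hc
    have : LinearMap.range (Y * D).mulVecLin = ⊥ := by
      exact Submodule.finrank_eq_zero.mp h0'
    apply hYD
    apply mulVec_all_zero
    intro v
    have : (Y * D).mulVecLin v ∈ (⊥ : Submodule F (Fin 2 → F)) := this ▸ LinearMap.mem_range_self _ v
    simpa only [Matrix.mulVecLin_apply, Submodule.mem_bot] using this
  have heq : LinearMap.range (Y * D).mulVecLin = LinearMap.range Y.mulVecLin := by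
    apply Submodule.eq_of_le_of_finrank_le hle
    calc Y.rank ≤ 1 := hY
    _ ≤ (Y * D).rank := hpos
  apply mulVec_all_zero
  intro v
  have hmem : Y.mulVecLin v ∈ LinearMap.range (Y * D).mulVecLin := by
    rw [heq]; exact LinearMap.mem_range_self _ v
  obtain ⟨w, hw⟩ := hmem
  have : (A * (Y * D)).mulVecLin w = 0 := by
    rw [show A * (Y * D) = 0 by rw [← Matrix.mul_assoc]; exact h0]
    simp
  have hw' : (Y * D) *ᵥ w = Y *ᵥ v := by simpa only [Matrix.mulVecLin_apply] using hw
  have hz : (A * (Y * D)) *ᵥ w = 0 := by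
    rw [← Matrix.mul_assoc, h0]; simp
  calc (A * Y) *ᵥ v = A *ᵥ (Y *ᵥ v) := by rw [Matrix.mulVec_mulVec]
  _ = A *ᵥ ((Y * D) *ᵥ w) := by rw [hw']
  _ = (A * (Y * D)) *ᵥ w := by rw [Matrix.mulVec_mulVec]
  _ = 0 := hz

theorem minimal_solution_forces_k_l_one
    {F : Type*} [Field F] (A B C D : Matrix (Fin 2) (Fin 2) F)
    (hA : A.rank ≤ 1) (hD : D.rank ≤ 1)
    (k m n ℓ : ℕ) (hk : 1 ≤ k) (hℓ : 1 ≤ ℓ)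
    (hsol : A ^ k * B ^ m * C ^ n * D ^ ℓ = 0)
    (hmin : ∀ k' m' n' ℓ' : ℕ, 1 ≤ k' → 1 ≤ ℓ' →
      A ^ k' * B ^ m' * C ^ n' * D ^ ℓ' = 0 →
      k + m + n + ℓ ≤ k' + m' + n' + ℓ')
    (h1 : A ^ k * B ^ m * C ^ n * D ^ (ℓ - 1) ≠ 0)
    (h2 : A ^ (k - 1) * B ^ m * C ^ n * D ^ ℓ ≠ 0) :
    k = 1 ∧ ℓ = 1 := by
  set Y := A ^ (k - 1) * B ^ m * C ^ n * D ^ (ℓ - 1) with hYdef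
  have hAY : A * Y = A ^ k * B ^ m * C ^ n * D ^ (ℓ - 1) := by
    rw [hYdef]
    have : A * A ^ (k - 1) = A ^ k := by
      rw [← pow_succ']
      congr 1
      omega
    rw [← Matrix.mul_assoc, ← Matrix.mul_assoc, ← Matrix.mul_assoc, this]
  have hYD : Y * D = A ^ (k - 1) * B ^ m * C ^ n * D ^ ℓ := by
    rw [hYdef]
    have : D ^ (ℓ - 1) * D = D ^ ℓ := by
      rw [← pow_succ]
      congr 1
      omega
    rw [Matrix.mul_assoc, this]
  have hAYD : A * Y * D = 0 := by
    rw [hAY, ← hsol]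
    have : D ^ (ℓ - 1) * D = D ^ ℓ := by
      rw [← pow_succ]; congr 1; omega
    rw [Matrix.mul_assoc, Matrix.mul_assoc, Matrix.mul_assoc, this, ← Matrix.mul_assoc,
      ← Matrix.mul_assoc]
  have key : ¬ Y.rank ≤ 1 := fun hYr =>
    (hAY ▸ h1) (rank_one_middle A Y D hYr hAYD (hYD ▸ h2))
  constructor
  · by_contra hk1
    apply key
    have hk2 : 2 ≤ k := by omega
    have : Y = A * (A ^ (k - 2) * B ^ m * C ^ n * D ^ (ℓ - 1)) := by
      rw [hYdef, ← Matrix.mul_assoc, ← Matrix.mul_assoc, ← Matrix.mul_assoc, ← pow_succ']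
      rw [show k - 2 + 1 = k - 1 from by omega]
    rw [this]
    calc (A * _).rank ≤ A.rank := Matrix.rank_mul_le_left _ _
    _ ≤ 1 := hA
  · by_contra hl1
    apply key
    have hl2 : 2 ≤ ℓ := by omega
    have : Y = (A ^ (k - 1) * B ^ m * C ^ n * D ^ (ℓ - 2)) * D := by
      rw [hYdef, Matrix.mul_assoc, Matrix.mul_assoc, Matrix.mul_assoc, ← pow_succ]
      rw [← Matrix.mul_assoc, ← Matrix.mul_assoc,
        show ℓ - 2 + 1 = ℓ - 1 from by omega]
    rw [this]
    calc (_ * D).rank ≤ D.rank := Matrix.rank_mul_le_right _ _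
    _ ≤ 1 := hD
end
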